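/- arXiv:1512.04691 — 5 statements merged into one kernel-verified Lean document; each statement's English description precedes it below -/
import Mathlib

section
/- With p_i/q_i the i-th convergent to √D, α_i = p_i + q_i√D, and T_i = p_i p_{i-1} - D q_i q_{i-1}, one has T_i = (-1)^{i+1}√D - N(α_i) c_{i+1}, where N(α_i) = p_i² - D q_i² and c_{i+1} is the (i+1)-st complete quotient of √D. -/
/-!
Writing `x = √D`, the complete quotients satisfy `x (c_{i+1} q_i + q_{i-1}) = c_{i+1} p_i + p_{i-1}`.
Multiplying this by `p_i + q_i x` and using the determinant identity
`p_i q_{i-1} - p_{i-1} q_i = (-1)^{i+1}` gives the formula for `T_i` by pure algebra.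
Since a square is `0` or `1` mod `4`, `√D` is irrational; hence no complete quotient is an
integer and the recursion `c_{i+1} = 1 / (c_i - u_i)` never divides by zero.
-/

open Real

theorem Nat.not_isSquare_of_mod_four {D : ℕ} (hD4 : D % 4 = 2 ∨ D % 4 = 3) : ¬ IsSquare D := by
  rintro ⟨k, rfl⟩
  have hk : k % 4 < 4 := Nat.mod_lt k (by norm_num)
  rw [Nat.mul_mod] at hD4
  interval_cases k % 4 <;> omega

section ContinuedFraction

variable {u : ℤ → ℤ} {c : ℤ → ℝ} {p q : ℤ → ℤ}

theorem irrational_completeQuotient (h0 : Irrational (c 0))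
    (hcrec : ∀ i : ℤ, 0 ≤ i → c (i + 1) = 1 / (c i - u i)) :
    ∀ i : ℤ, 0 ≤ i → Irrational (c i) := by
  refine Int.leInduction h0 fun n hn ih => ?_
  rw [hcrec n hn, one_div]
  exact (ih.sub_intCast (u n)).inv

theorem convergent_det (hpm : p (-1) = 1) (hqm : q (-1) = 0) (hq0 : q 0 = 1)
    (hprec : ∀ i : ℤ, 0 ≤ i → p (i + 1) = u (i + 1) * p i + p (i - 1))
    (hqrec : ∀ i : ℤ, 0 ≤ i → q (i + 1) = u (i + 1) * q i + q (i - 1)) :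
    ∀ i : ℤ, 0 ≤ i → ((p i : ℝ) * q (i - 1) - p (i - 1) * q i) = (-1 : ℝ) ^ (i + 1) := by
  refine Int.leInduction ?_ fun n hn ih => ?_
  · norm_num [hpm, hqm, hq0]
  · rw [add_sub_cancel_right, hprec n hn, hqrec n hn,
      zpow_add_one₀ (by norm_num : (-1 : ℝ) ≠ 0), ← ih]
    push_cast
    ring

theorem mul_completeQuotient_convergent_denom (x : ℝ) (hc0 : c 0 = x)
    (hcmul : ∀ i : ℤ, 0 ≤ i → (c i - u i) * c (i + 1) = 1)
    (hpm : p (-1) = 1) (hqm : q (-1) = 0) (hp0 : p 0 = u 0) (hq0 : q 0 = 1)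
    (hprec : ∀ i : ℤ, 0 ≤ i → p (i + 1) = u (i + 1) * p i + p (i - 1))
    (hqrec : ∀ i : ℤ, 0 ≤ i → q (i + 1) = u (i + 1) * q i + q (i - 1)) :
    ∀ i : ℤ, 0 ≤ i → x * (c (i + 1) * q i + q (i - 1)) = c (i + 1) * p i + p (i - 1) := by
  refine Int.leInduction ?_ fun n hn ih => ?_
  · have h := hcmul 0 le_rfl
    rw [hc0, zero_add] at h
    rw [zero_add, zero_sub, hpm, hqm, hp0, hq0]
    push_cast
    linear_combination h
  · have h := hcmul (n + 1) (by omega)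
    rw [add_sub_cancel_right, hprec n hn, hqrec n hn]
    push_cast
    linear_combination c (n + 1 + 1) * ih + (p n - x * q n) * h

end ContinuedFraction

theorem stmt1_general (D : ℕ) (hD4 : D % 4 = 2 ∨ D % 4 = 3)
    (u : ℤ → ℤ) (c : ℤ → ℝ)
    (hc0 : c 0 = Real.sqrt D)
    (hcrec : ∀ i : ℤ, 0 ≤ i → c (i + 1) = 1 / (c i - u i))
    (p q : ℤ → ℤ)
    (hpm : p (-1) = 1) (hqm : q (-1) = 0)
    (hp0 : p 0 = u 0) (hq0 : q 0 = 1)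
    (hprec : ∀ i : ℤ, 0 ≤ i → p (i + 1) = u (i + 1) * p i + p (i - 1))
    (hqrec : ∀ i : ℤ, 0 ≤ i → q (i + 1) = u (i + 1) * q i + q (i - 1)) :
    ∀ i : ℤ, 0 ≤ i →
      ((p i * p (i - 1) - (D : ℤ) * (q i * q (i - 1)) : ℤ) : ℝ)
        = (-1 : ℝ) ^ (i + 1) * Real.sqrt D - ((p (i) : ℝ) ^ 2 - (D : ℝ) * (q (i) : ℝ) ^ 2) * c (i + 1) := by
  have hirr : ∀ i : ℤ, 0 ≤ i → Irrational (c i) := by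
    refine irrational_completeQuotient ?_ hcrec
    rw [hc0]
    exact irrational_sqrt_natCast_iff.mpr (Nat.not_isSquare_of_mod_four hD4)
  have hcmul : ∀ i : ℤ, 0 ≤ i → (c i - u i) * c (i + 1) = 1 := fun i hi => by
    rw [hcrec i hi, mul_one_div_cancel ((hirr i hi).sub_intCast (u i)).ne_zero]
  intro i hi
  have hx := mul_completeQuotient_convergent_denom _ hc0 hcmul hpm hqm hp0 hq0 hprec hqrec i hi
  have hdet := convergent_det hpm hqm hq0 hprec hqrec i hi
  have hsq : √(D : ℝ) ^ 2 = D := Real.sq_sqrt (Nat.cast_nonneg D)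
  push_cast
  linear_combination √(D : ℝ) * hdet - (p i + q i * √(D : ℝ)) * hx
    + (c (i + 1) * q i ^ 2 + q i * q (i - 1)) * hsq

theorem stmt1 (D : ℕ) (hDsf : Squarefree D) (hD4 : D % 4 = 2 ∨ D % 4 = 3)
    (u : ℤ → ℤ) (c : ℤ → ℝ)
    (hc0 : c 0 = Real.sqrt D)
    (hu : ∀ i : ℤ, 0 ≤ i → u i = ⌊c i⌋)
    (hcrec : ∀ i : ℤ, 0 ≤ i → c (i + 1) = 1 / (c i - u i))
    (p q : ℤ → ℤ)
    (hpm : p (-1) = 1) (hqm : q (-1) = 0)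
    (hp0 : p 0 = u 0) (hq0 : q 0 = 1)
    (hprec : ∀ i : ℤ, 0 ≤ i → p (i + 1) = u (i + 1) * p i + p (i - 1))
    (hqrec : ∀ i : ℤ, 0 ≤ i → q (i + 1) = u (i + 1) * q i + q (i - 1)) :
    ∀ i : ℤ, 0 ≤ i →
      ((p i * p (i - 1) - (D : ℤ) * (q i * q (i - 1)) : ℤ) : ℝ)
        = (-1 : ℝ) ^ (i + 1) * Real.sqrt D - ((p (i) : ℝ) ^ 2 - (D : ℝ) * (q (i) : ℝ) ^ 2) * c (i + 1) :=
  stmt1_general D hD4 u c hc0 hcrec p q hpm hqm hp0 hq0 hprec hqrec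
end

section
/- For all i ≥ 0, the two-sided estimate (2√D / c_{i+1}) · (1 − 1/(c_i c_{i+1})) < N_i < 2√D / c_{i+1} holds, where N_i = |p_i² − D q_i²|. -/
/-!
Write `εᵢ = pᵢ - √D qᵢ` and `πᵢ = pᵢ + √D qᵢ`, so that `Nᵢ = |εᵢ| πᵢ`. The complete quotients
satisfy `εᵢ cᵢ₊₁ = -εᵢ₋₁`, and `pᵢ qᵢ₋₁ - pᵢ₋₁ qᵢ = ±1`; expanding
`πᵢ εᵢ₋₁ - εᵢ πᵢ₋₁ = -2√D (pᵢ qᵢ₋₁ - pᵢ₋₁ qᵢ)` gives the exact identity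
`Nᵢ cᵢ₊₁ + Nᵢ₋₁ / cᵢ₊₁ = 2√D`. Since `Nᵢ₋₁ > 0` this is the upper bound, and feeding the upper
bound `Nᵢ₋₁ < 2√D / cᵢ` back into it is the lower bound.
-/

open Real

structure IsCompleteQuotients (s : ℝ) (u : ℤ → ℤ) (c : ℤ → ℝ) : Prop where
  zero : c 0 = s
  floor : ∀ i : ℤ, 0 ≤ i → u i = ⌊c i⌋
  succ : ∀ i : ℤ, 0 ≤ i → c (i + 1) = 1 / (c i - u i)

structure IsConvergents (u p q : ℤ → ℤ) : Prop where
  num_neg_one : p (-1) = 1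
  den_neg_one : q (-1) = 0
  num_zero : p 0 = u 0
  den_zero : q 0 = 1
  num_succ : ∀ i : ℤ, 0 ≤ i → p (i + 1) = u (i + 1) * p i + p (i - 1)
  den_succ : ∀ i : ℤ, 0 ≤ i → q (i + 1) = u (i + 1) * q i + q (i - 1)

lemma irrational_sqrt_of_mod_four {D : ℕ} (hD : D % 4 = 2 ∨ D % 4 = 3) : Irrational √D := by
  refine irrational_sqrt_natCast_iff.mpr ?_
  rintro ⟨m, rfl⟩
  rw [Nat.mul_mod] at hD
  have := Nat.mod_lt m four_pos
  interval_cases m % 4 <;> omega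

lemma nonneg_of_linear_recurrence {u x : ℤ → ℤ} (hu : ∀ i : ℤ, 0 ≤ i → 0 ≤ u i)
    (hx : ∀ i : ℤ, 0 ≤ i → x (i + 1) = u (i + 1) * x i + x (i - 1))
    (hx₁ : 0 ≤ x (-1)) (hx₀ : 0 ≤ x 0) : ∀ i : ℤ, -1 ≤ i → 0 ≤ x i := by
  have key : ∀ i : ℤ, 0 ≤ i → 0 ≤ x (i - 1) ∧ 0 ≤ x i := by
    intro i hi
    induction i, hi using Int.leInduction with
    | base => exact ⟨hx₁, hx₀⟩
    | succ n hn ih =>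
      rw [add_sub_cancel_right, hx n hn]
      exact ⟨ih.2, add_nonneg (mul_nonneg (hu (n + 1) (by omega)) ih.2) ih.1⟩
  intro i hi
  simpa using (key (i + 1) (by omega)).1

namespace IsCompleteQuotients

variable {s : ℝ} {u : ℤ → ℤ} {c : ℤ → ℝ}

lemma succ_eq_inv_fract (h : IsCompleteQuotients s u c) {i : ℤ} (hi : 0 ≤ i) :
    c (i + 1) = (Int.fract (c i))⁻¹ := by
  rw [h.succ i hi, h.floor i hi, one_div, Int.fract]

lemma irrational (h : IsCompleteQuotients s u c) (hs : Irrational s) :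
    ∀ i : ℤ, 0 ≤ i → Irrational (c i) := by
  intro i hi
  induction i, hi using Int.leInduction with
  | base => rwa [h.zero]
  | succ n hn ih =>
    rw [h.succ_eq_inv_fract hn, Int.fract]
    exact (ih.sub_intCast _).inv

lemma fract_pos (h : IsCompleteQuotients s u c) (hs : Irrational s) {i : ℤ} (hi : 0 ≤ i) :
    0 < Int.fract (c i) :=
  Int.fract_pos.mpr ((h.irrational hs i hi).ne_int _)

lemma succ_mul_sub_floor (h : IsCompleteQuotients s u c) (hs : Irrational s) {i : ℤ}
    (hi : 0 ≤ i) : c (i + 1) * (c i - u i) = 1 := by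
  rw [h.succ_eq_inv_fract hi, h.floor i hi]
  exact inv_mul_cancel₀ (h.fract_pos hs hi).ne'

lemma one_lt_succ (h : IsCompleteQuotients s u c) (hs : Irrational s) {i : ℤ} (hi : 0 ≤ i) :
    1 < c (i + 1) := by
  rw [h.succ_eq_inv_fract hi]
  exact one_lt_inv₀ (h.fract_pos hs hi) |>.mpr (Int.fract_lt_one _)

lemma pos (h : IsCompleteQuotients s u c) (hs : Irrational s) (hs₀ : 0 < s) {i : ℤ}
    (hi : 0 ≤ i) : 0 < c i := by
  obtain rfl | hi := hi.eq_or_lt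
  · rwa [h.zero]
  · have := h.one_lt_succ hs (i := i - 1) (by omega)
    rw [sub_add_cancel] at this
    linarith

lemma floor_nonneg (h : IsCompleteQuotients s u c) (hs : Irrational s) (hs₀ : 0 < s) {i : ℤ}
    (hi : 0 ≤ i) : 0 ≤ u i := by
  rw [h.floor i hi]
  exact Int.floor_nonneg.mpr (h.pos hs hs₀ hi).le

end IsCompleteQuotients

namespace IsConvergents

variable {u p q : ℤ → ℤ}

lemma abs_det (h : IsConvergents u p q) :
    ∀ i : ℤ, 0 ≤ i → |p i * q (i - 1) - p (i - 1) * q i| = 1 := by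
  intro i hi
  induction i, hi using Int.leInduction with
  | base => simp [h.num_neg_one, h.den_neg_one, h.den_zero]
  | succ n hn ih =>
    have hneg : p (n + 1) * q n - p n * q (n + 1) = -(p n * q (n - 1) - p (n - 1) * q n) := by
      rw [h.num_succ n hn, h.den_succ n hn]
      ring
    rw [add_sub_cancel_right, hneg, abs_neg, ih]

lemma num_add_mul_den_pos (h : IsConvergents u p q) (hu : ∀ i : ℤ, 0 ≤ i → 0 ≤ u i)
    {s : ℝ} (hs : 0 < s) {i : ℤ} (hi : -1 ≤ i) : 0 < (p i : ℝ) + s * q i := by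
  have hp : (0 : ℝ) ≤ p i := Int.cast_nonneg <| nonneg_of_linear_recurrence hu h.num_succ
    (by simp [h.num_neg_one]) (h.num_zero ▸ hu 0 le_rfl) i hi
  have hq : (0 : ℝ) ≤ q i := Int.cast_nonneg <| nonneg_of_linear_recurrence hu h.den_succ
    h.den_neg_one.ge (by simp [h.den_zero]) i hi
  have hpq : p i ≠ 0 ∨ q i ≠ 0 := by
    obtain rfl | hi := hi.eq_or_lt
    · simp [h.num_neg_one]
    · by_contra! h₀
      simpa [h₀] using h.abs_det i (by omega)
  rcases hpq with hp₀ | hq₀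
  · exact add_pos_of_pos_of_nonneg (hp.lt_of_ne' (by exact_mod_cast hp₀)) (by positivity)
  · exact add_pos_of_nonneg_of_pos hp (mul_pos hs (hq.lt_of_ne' (by exact_mod_cast hq₀)))

lemma num_sub_mul_den_mul_eq (h : IsConvergents u p q) {s : ℝ} {c : ℤ → ℝ}
    (hc : IsCompleteQuotients s u c) (hs : Irrational s) :
    ∀ i : ℤ, 0 ≤ i →
      ((p i : ℝ) - s * q i) * c (i + 1) = -((p (i - 1) : ℝ) - s * q (i - 1)) := by
  intro i hi
  induction i, hi using Int.leInduction with
  | base =>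
    have h₀ := hc.succ_mul_sub_floor hs le_rfl
    rw [zero_add, hc.zero] at h₀
    simp only [zero_sub, h.num_zero, h.den_zero, h.num_neg_one, h.den_neg_one]
    push_cast
    linear_combination -h₀
  | succ n hn ih =>
    have h₁ := hc.succ_mul_sub_floor hs (i := n + 1) (by omega)
    rw [add_sub_cancel_right, h.num_succ n hn, h.den_succ n hn]
    push_cast
    linear_combination c (n + 1 + 1) * ih - ((p n : ℝ) - s * q n) * h₁

end IsConvergents

lemma abs_num_sub_mul_den_mul_eq {s c : ℝ} {p q p' q' : ℤ} (hs : 0 ≤ s)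
    (hX : 0 < ((p : ℝ) + s * q) * c + ((p' : ℝ) + s * q'))
    (herr : ((p : ℝ) - s * q) * c = -((p' : ℝ) - s * q')) (hdet : |p * q' - p' * q| = 1) :
    |(p : ℝ) - s * q| * (((p : ℝ) + s * q) * c + ((p' : ℝ) + s * q')) = 2 * s := by
  have hexpand : ((p : ℝ) - s * q) * (((p : ℝ) + s * q) * c + ((p' : ℝ) + s * q')) =
      2 * s * ((p * q' - p' * q : ℤ) : ℝ) := by
    push_cast
    linear_combination ((p : ℝ) + s * q) * herr
  rw [← abs_of_pos hX, ← abs_mul, hexpand, abs_mul, ← Int.cast_abs, hdet, Int.cast_one, mul_one,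
    abs_of_nonneg (by positivity)]

lemma pell_form_bounds {s c c₀ : ℝ} {p q p' q' : ℤ} (hs : 0 < s) (hc : 0 < c) (hc₀ : 0 < c₀)
    (hπ : 0 < (p : ℝ) + s * q) (hπ' : 0 < (p' : ℝ) + s * q')
    (herr : ((p : ℝ) - s * q) * c = -((p' : ℝ) - s * q')) (hdet : |p * q' - p' * q| = 1)
    (hprev : |(p' : ℝ) ^ 2 - s ^ 2 * (q' : ℝ) ^ 2| < 2 * s / c₀) :
    2 * s / c * (1 - 1 / (c₀ * c)) < |(p : ℝ) ^ 2 - s ^ 2 * (q : ℝ) ^ 2| ∧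
      |(p : ℝ) ^ 2 - s ^ 2 * (q : ℝ) ^ 2| < 2 * s / c := by
  set e := |(p : ℝ) - s * q|
  have hid := abs_num_sub_mul_den_mul_eq hs.le (by positivity) herr hdet
  have he : 0 < e := (abs_nonneg _).lt_of_ne fun h => by rw [← h, zero_mul] at hid; linarith
  have hN : |(p : ℝ) ^ 2 - s ^ 2 * (q : ℝ) ^ 2| = e * ((p : ℝ) + s * q) := by
    rw [show (p : ℝ) ^ 2 - s ^ 2 * (q : ℝ) ^ 2 = ((p : ℝ) - s * q) * ((p : ℝ) + s * q) by ring,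
      abs_mul, abs_of_pos hπ]
  have hN' : |(p' : ℝ) ^ 2 - s ^ 2 * (q' : ℝ) ^ 2| = e * c * ((p' : ℝ) + s * q') := by
    rw [show (p' : ℝ) ^ 2 - s ^ 2 * (q' : ℝ) ^ 2 = -(((p : ℝ) - s * q) * c) * ((p' : ℝ) + s * q')
      by rw [herr]; ring, abs_mul, abs_neg, abs_mul, abs_of_pos hc, abs_of_pos hπ']
  rw [hN]
  rw [hN', lt_div_iff₀ hc₀] at hprev
  have hprev' : e * ((p' : ℝ) + s * q') < 2 * s / (c₀ * c) := by
    rw [lt_div_iff₀ (by positivity)]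
    linarith
  have hsolve : e * ((p : ℝ) + s * q) = (2 * s - e * ((p' : ℝ) + s * q')) / c := by
    rw [eq_div_iff hc.ne']
    linarith
  constructor
  · calc 2 * s / c * (1 - 1 / (c₀ * c)) = (2 * s - 2 * s / (c₀ * c)) / c := by ring
      _ < (2 * s - e * ((p' : ℝ) + s * q')) / c := by gcongr
      _ = e * ((p : ℝ) + s * q) := hsolve.symm
  · rw [hsolve]
    gcongr
    linarith [mul_pos he hπ']

theorem stmt4_general (D : ℕ) (hD4 : D % 4 = 2 ∨ D % 4 = 3)
    (u : ℤ → ℤ) (c : ℤ → ℝ)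
    (hc0 : c 0 = Real.sqrt D)
    (hu : ∀ i : ℤ, 0 ≤ i → u i = ⌊c i⌋)
    (hcrec : ∀ i : ℤ, 0 ≤ i → c (i + 1) = 1 / (c i - u i))
    (p q : ℤ → ℤ)
    (hpm : p (-1) = 1) (hqm : q (-1) = 0)
    (hp0 : p 0 = u 0) (hq0 : q 0 = 1)
    (hprec : ∀ i : ℤ, 0 ≤ i → p (i + 1) = u (i + 1) * p i + p (i - 1))
    (hqrec : ∀ i : ℤ, 0 ≤ i → q (i + 1) = u (i + 1) * q i + q (i - 1)) :
    ∀ i : ℤ, 0 ≤ i →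
      2 * Real.sqrt D / c (i + 1) * (1 - 1 / (c i * c (i + 1))) < |(p (i) : ℝ) ^ 2 - (D : ℝ) * (q (i) : ℝ) ^ 2| ∧
      |(p (i) : ℝ) ^ 2 - (D : ℝ) * (q (i) : ℝ) ^ 2| < 2 * Real.sqrt D / c (i + 1) := by
  set s := Real.sqrt D
  have hirr : Irrational s := irrational_sqrt_of_mod_four hD4
  have hs : 0 < s := (Real.sqrt_nonneg _).lt_of_ne hirr.ne_zero.symm
  have hcq : IsCompleteQuotients s u c := ⟨hc0, hu, hcrec⟩
  have hpq : IsConvergents u p q := ⟨hpm, hqm, hp0, hq0, hprec, hqrec⟩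
  have hπ {i : ℤ} (hi : -1 ≤ i) : 0 < (p i : ℝ) + s * q i :=
    hpq.num_add_mul_den_pos (fun _ => hcq.floor_nonneg hirr hs) hs hi
  have hstep {i : ℤ} (hi : 0 ≤ i)
      (hprev : |(p (i - 1) : ℝ) ^ 2 - s ^ 2 * (q (i - 1) : ℝ) ^ 2| < 2 * s / c i) :=
    pell_form_bounds hs (hcq.pos hirr hs (by omega)) (hcq.pos hirr hs hi) (hπ (by omega))
      (hπ (by omega)) (hpq.num_sub_mul_den_mul_eq hcq hirr i hi) (hpq.abs_det i hi) hprev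
  rw [show (D : ℝ) = s ^ 2 from (Real.sq_sqrt D.cast_nonneg).symm]
  intro i hi
  induction i, hi using Int.leInduction with
  | base =>
    refine hstep le_rfl ?_
    rw [hc0, mul_div_assoc, div_self hs.ne']
    norm_num [hpm, hqm]
  | succ n hn ih => exact hstep (by omega) (by simpa using ih.2)

theorem stmt4 (D : ℕ) (hDsf : Squarefree D) (hD4 : D % 4 = 2 ∨ D % 4 = 3)
    (u : ℤ → ℤ) (c : ℤ → ℝ)
    (hc0 : c 0 = Real.sqrt D)
    (hu : ∀ i : ℤ, 0 ≤ i → u i = ⌊c i⌋)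
    (hcrec : ∀ i : ℤ, 0 ≤ i → c (i + 1) = 1 / (c i - u i))
    (p q : ℤ → ℤ)
    (hpm : p (-1) = 1) (hqm : q (-1) = 0)
    (hp0 : p 0 = u 0) (hq0 : q 0 = 1)
    (hprec : ∀ i : ℤ, 0 ≤ i → p (i + 1) = u (i + 1) * p i + p (i - 1))
    (hqrec : ∀ i : ℤ, 0 ≤ i → q (i + 1) = u (i + 1) * q i + q (i - 1)) :
    ∀ i : ℤ, 0 ≤ i →
      2 * Real.sqrt D / c (i + 1) * (1 - 1 / (c i * c (i + 1))) < |(p (i) : ℝ) ^ 2 - (D : ℝ) * (q (i) : ℝ) ^ 2| ∧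
      |(p (i) : ℝ) ^ 2 - (D : ℝ) * (q (i) : ℝ) ^ 2| < 2 * Real.sqrt D / c (i + 1) :=
  stmt4_general D hD4 u c hc0 hu hcrec p q hpm hqm hp0 hq0 hprec hqrec
end

section
/- For i ≥ 0 there exists ε with 0 < ε ≤ 1 such that N_i/(2√D) = 1/u_{i+1} − ε·(1/u_{i+1}²)·(1/u_i + 1/u_{i+2}); in particular N_i < 2√D/u_{i+1}. -/
/-!
With `x = √D`, `s i = p i + x q i` and `e i = p i - x q i` one has `N_i = s_i |e_i|`. The complete
quotients give `e_{i-1} = -c_{i+1} e_i`, and the Casoratian `s_i e_{i-1} - s_{i-1} e_i` has constant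
absolute value `2x`; together `N_i / (2x) = 1 / (u_{i+1} + δ)` with `δ = s_{i-1}/s_i + 1/c_{i+2}`.
Since `s_{i-1}/s_i ≤ 1/u_i` and `1/c_{i+2} ≤ 1/u_{i+2}`, we get `0 < δ ≤ 1/u_i + 1/u_{i+2}`, and
`1/U - 1/(U+δ) = δ/(U(U+δ))` lies in `(0, δ/U²]`.
-/

open Real

theorem irrational_sqrt_of_squarefree {n : ℕ} (hn : Squarefree n) (h1 : n ≠ 1) :
    Irrational √n := by
  refine irrational_sqrt_natCast_iff.mpr ?_
  rintro ⟨k, rfl⟩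
  obtain rfl : k = 1 := Nat.isUnit_iff.mp (hn k dvd_rfl)
  exact h1 rfl

theorem exists_one_div_add_eq_one_div_sub {U δ S : ℝ} (hU : 0 < U) (hδ : 0 < δ) (hδS : δ ≤ S) :
    ∃ ε : ℝ, 0 < ε ∧ ε ≤ 1 ∧ 1 / (U + δ) = 1 / U - ε * (1 / U ^ 2) * S := by
  have hS : 0 < S := hδ.trans_le hδS
  refine ⟨U * δ / ((U + δ) * S), by positivity, ?_, ?_⟩
  · rw [div_le_one (by positivity)]
    nlinarith
  · field_simp
    ring

structure IsContinuedFraction (u : ℤ → ℤ) (c : ℤ → ℝ) : Prop where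
  irrational_zero : Irrational (c 0)
  one_lt_zero : 1 < c 0
  floor_eq : ∀ i, 0 ≤ i → u i = ⌊c i⌋
  succ_eq : ∀ i, 0 ≤ i → c (i + 1) = 1 / (c i - u i)

namespace IsContinuedFraction

variable {u : ℤ → ℤ} {c : ℤ → ℝ}

theorem irrational_and_one_lt (hc : IsContinuedFraction u c) :
    ∀ i, 0 ≤ i → Irrational (c i) ∧ 1 < c i := by
  intro i hi
  induction i, hi using Int.leInduction with
  | base => exact ⟨hc.irrational_zero, hc.one_lt_zero⟩
  | succ i hi ih =>
    have hfract : c i - u i = Int.fract (c i) := by rw [hc.floor_eq i hi, Int.self_sub_floor]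
    have hpos : 0 < Int.fract (c i) := Int.fract_pos.mpr (ih.1.ne_int _)
    rw [hc.succ_eq i hi, hfract]
    exact ⟨by simpa [one_div, ← hfract] using (ih.1.sub_intCast (u i)).inv,
      one_lt_one_div hpos (Int.fract_lt_one _)⟩

theorem one_lt_complete (hc : IsContinuedFraction u c) {i : ℤ} (hi : 0 ≤ i) : 1 < c i :=
  (hc.irrational_and_one_lt i hi).2

theorem partial_le_complete (hc : IsContinuedFraction u c) {i : ℤ} (hi : 0 ≤ i) :
    (u i : ℝ) ≤ c i := by
  rw [hc.floor_eq i hi]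
  exact Int.floor_le _

theorem one_le_partial (hc : IsContinuedFraction u c) {i : ℤ} (hi : 0 ≤ i) :
    (1 : ℝ) ≤ u i := by
  rw [hc.floor_eq i hi]
  exact_mod_cast Int.le_floor.mpr (by exact_mod_cast (hc.one_lt_complete hi).le)

theorem complete_eq_add_one_div (hc : IsContinuedFraction u c) {i : ℤ} (hi : 0 ≤ i) :
    c i = u i + 1 / c (i + 1) := by
  rw [hc.succ_eq i hi, one_div_one_div]
  ring

end IsContinuedFraction

def SatisfiesCFRecurrence (u : ℤ → ℤ) (a : ℤ → ℝ) : Prop :=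
  ∀ i, 0 ≤ i → a (i + 1) = u (i + 1) * a i + a (i - 1)

namespace SatisfiesCFRecurrence

variable {u : ℤ → ℤ} {a b : ℤ → ℝ}

theorem intCast_add_mul {p q : ℤ → ℤ}
    (hp : ∀ i, 0 ≤ i → p (i + 1) = u (i + 1) * p i + p (i - 1))
    (hq : ∀ i, 0 ≤ i → q (i + 1) = u (i + 1) * q i + q (i - 1)) (t : ℝ) :
    SatisfiesCFRecurrence u (fun i => (p i : ℝ) + t * q i) := by
  intro i hi
  simp only [hp i hi, hq i hi, Int.cast_add, Int.cast_mul]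
  ring

/-- The Casoratian of two solutions changes sign at each step. -/
theorem abs_casoratian_eq (ha : SatisfiesCFRecurrence u a) (hb : SatisfiesCFRecurrence u b) :
    ∀ i, 0 ≤ i → |a i * b (i - 1) - a (i - 1) * b i| = |a 0 * b (-1) - a (-1) * b 0| := by
  intro i hi
  induction i, hi using Int.leInduction with
  | base => rfl
  | succ i hi ih =>
    rw [← ih, add_sub_cancel_right, ha i hi, hb i hi, ← abs_neg]
    ring_nf

theorem pos (ha : SatisfiesCFRecurrence u a) (hu : ∀ i, 0 ≤ i → 0 ≤ u i)
    (hneg : 0 < a (-1)) (hzero : 0 < a 0) : ∀ i, -1 ≤ i → 0 < a i := by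
  suffices ∀ i, -1 ≤ i → 0 < a i ∧ 0 < a (i + 1) from fun i hi => (this i hi).1
  intro i hi
  induction i, hi using Int.leInduction with
  | base => exact ⟨hneg, hzero⟩
  | succ i hi ih =>
    refine ⟨ih.2, ?_⟩
    rw [ha (i + 1) (by omega), add_sub_cancel_right]
    have hu' : (0 : ℝ) ≤ u (i + 1 + 1) := by exact_mod_cast hu _ (by omega)
    exact add_pos_of_nonneg_of_pos (mul_nonneg hu' ih.2.le) ih.1

theorem mul_pred_le (ha : SatisfiesCFRecurrence u a) (hpos : ∀ i, -1 ≤ i → 0 < a i)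
    (hzero : u 0 * a (-1) ≤ a 0) : ∀ i, 0 ≤ i → u i * a (i - 1) ≤ a i := by
  intro i hi
  obtain rfl | hi := hi.eq_or_lt
  · exact hzero
  · have := ha (i - 1) (by omega)
    rw [sub_add_cancel] at this
    linarith [hpos (i - 1 - 1) (by omega)]

end SatisfiesCFRecurrence

structure AreConvergents (u : ℤ → ℤ) (p q : ℤ → ℤ) : Prop where
  p_neg_one : p (-1) = 1
  q_neg_one : q (-1) = 0
  p_zero : p 0 = u 0
  q_zero : q 0 = 1
  p_succ : ∀ i, 0 ≤ i → p (i + 1) = u (i + 1) * p i + p (i - 1)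
  q_succ : ∀ i, 0 ≤ i → q (i + 1) = u (i + 1) * q i + q (i - 1)

namespace IsContinuedFraction

variable {u : ℤ → ℤ} {c : ℤ → ℝ}

/-- For `a = p - c 0 * q` with convergents `p / q` this is
`c 0 = (c (i+1) p i + p (i-1)) / (c (i+1) q i + q (i-1))`. -/
theorem mul_succ_add_pred_eq_zero (hc : IsContinuedFraction u c) {a : ℤ → ℝ}
    (ha : SatisfiesCFRecurrence u a) (hzero : a 0 * c 1 + a (-1) = 0) :
    ∀ i, 0 ≤ i → a i * c (i + 1) + a (i - 1) = 0 := by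
  intro i hi
  induction i, hi using Int.leInduction with
  | base => exact hzero
  | succ i hi ih =>
    have hc₂ : c (i + 1 + 1) ≠ 0 := (zero_lt_one.trans (hc.one_lt_complete (by omega))).ne'
    rw [ha i hi, add_sub_cancel_right, eq_neg_of_add_eq_zero_right ih,
      hc.complete_eq_add_one_div (i := i + 1) (by omega)]
    field_simp
    ring

variable {p q : ℤ → ℤ}

theorem add_mul_pos (hc : IsContinuedFraction u c) (hpq : AreConvergents u p q) :
    ∀ j, -1 ≤ j → 0 < (p j : ℝ) + c 0 * q j :=
  SatisfiesCFRecurrence.pos (.intCast_add_mul hpq.p_succ hpq.q_succ (c 0))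
    (fun j hj => by exact_mod_cast (zero_le_one.trans (hc.one_le_partial hj)))
    (by simp [hpq.p_neg_one, hpq.q_neg_one])
    (by simp only [hpq.p_zero, hpq.q_zero]; push_cast
        linarith [hc.one_le_partial le_rfl, hc.one_lt_zero])

theorem add_mul_div_le (hc : IsContinuedFraction u c) (hpq : AreConvergents u p q) {i : ℤ}
    (hi : 0 ≤ i) :
    ((p (i - 1) : ℝ) + c 0 * q (i - 1)) / (p i + c 0 * q i) ≤ 1 / u i := by
  rw [div_le_div_iff₀ (hc.add_mul_pos hpq i (by omega)) (by linarith [hc.one_le_partial hi]),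
    one_mul, mul_comm]
  refine SatisfiesCFRecurrence.mul_pred_le (.intCast_add_mul hpq.p_succ hpq.q_succ (c 0))
    (hc.add_mul_pos hpq) ?_ i hi
  simp [hpq.p_neg_one, hpq.q_neg_one, hpq.p_zero, hpq.q_zero, (zero_lt_one.trans hc.one_lt_zero).le]

theorem abs_norm_div_eq (hc : IsContinuedFraction u c) (hpq : AreConvergents u p q) {i : ℤ}
    (hi : 0 ≤ i) :
    |(p i : ℝ) ^ 2 - c 0 ^ 2 * (q i : ℝ) ^ 2| / (2 * c 0)
      = 1 / (c (i + 1) + ((p (i - 1) : ℝ) + c 0 * q (i - 1)) / (p i + c 0 * q i)) := by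
  set x := c 0
  have hx0 : 0 < x := zero_lt_one.trans hc.one_lt_zero
  set s : ℤ → ℝ := fun j => (p j : ℝ) + x * q j
  set e : ℤ → ℝ := fun j => (p j : ℝ) + -x * q j
  have he : SatisfiesCFRecurrence u e := .intCast_add_mul hpq.p_succ hpq.q_succ (-x)
  have hcas : |s i * e (i - 1) - s (i - 1) * e i| = 2 * x := by
    rw [SatisfiesCFRecurrence.abs_casoratian_eq
      (.intCast_add_mul hpq.p_succ hpq.q_succ x) he i hi]
    simp only [e, hpq.p_neg_one, hpq.q_neg_one, hpq.p_zero, hpq.q_zero]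
    push_cast
    rw [abs_of_pos (by linarith)]
    ring
  have he_pred : e (i - 1) = -(e i * c (i + 1)) := by
    refine eq_neg_of_add_eq_zero_right (hc.mul_succ_add_pred_eq_zero he ?_ i hi)
    have : x - u 0 ≠ 0 := sub_ne_zero.mpr (hc.irrational_zero.ne_int (u 0))
    have hc₁ : c 1 = 1 / (x - u 0) := by simpa using hc.succ_eq 0 le_rfl
    simp only [e, hpq.p_neg_one, hpq.q_neg_one, hpq.p_zero, hpq.q_zero, hc₁]
    push_cast
    field_simp
    ring
  have hs_i : 0 < s i := hc.add_mul_pos hpq i (by omega)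
  have hs_pred : 0 < s (i - 1) := hc.add_mul_pos hpq (i - 1) (by omega)
  have hc_succ : 0 < c (i + 1) := zero_lt_one.trans (hc.one_lt_complete (by omega))
  have hnorm : |(p i : ℝ) ^ 2 - x ^ 2 * (q i : ℝ) ^ 2| = s i * |e i| := by
    rw [← abs_of_pos hs_i, ← abs_mul]
    simp only [s, e]
    ring_nf
  have hcas' : |e i| * (c (i + 1) * s i + s (i - 1)) = 2 * x := by
    rw [← hcas, he_pred, ← abs_of_pos (by positivity : 0 < c (i + 1) * s i + s (i - 1)),
      ← abs_mul, ← abs_neg]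
    ring_nf
  have he_ne : |e i| ≠ 0 := by
    rintro h
    rw [h, zero_mul] at hcas'
    linarith
  change _ = 1 / (c (i + 1) + s (i - 1) / s i)
  rw [hnorm, ← hcas']
  field_simp

theorem exists_abs_norm_div_eq (hc : IsContinuedFraction u c) (hpq : AreConvergents u p q)
    {i : ℤ} (hi : 0 ≤ i) :
    ∃ δ : ℝ, 0 < δ ∧ δ ≤ 1 / u i + 1 / u (i + 2) ∧
      |(p i : ℝ) ^ 2 - c 0 ^ 2 * (q i : ℝ) ^ 2| / (2 * c 0) = 1 / (u (i + 1) + δ) := by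
  have hc_two : 0 < c (i + 2) := zero_lt_one.trans (hc.one_lt_complete (by omega))
  have hratio_pos : 0 < ((p (i - 1) : ℝ) + c 0 * q (i - 1)) / (p i + c 0 * q i) :=
    div_pos (hc.add_mul_pos hpq _ (by omega)) (hc.add_mul_pos hpq _ (by omega))
  refine ⟨_ + 1 / c (i + 2), by positivity, add_le_add (hc.add_mul_div_le hpq hi)
    (one_div_le_one_div_of_le (by linarith [hc.one_le_partial (i := i + 2) (by omega)])
      (hc.partial_le_complete (by omega))), ?_⟩
  rw [hc.abs_norm_div_eq hpq hi, hc.complete_eq_add_one_div (i := i + 1) (by omega),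
    show i + 1 + 1 = i + 2 by ring]
  ring

end IsContinuedFraction

theorem stmt8 (D : ℕ) (hDsf : Squarefree D) (hD4 : D % 4 = 2 ∨ D % 4 = 3)
    (u : ℤ → ℤ) (c : ℤ → ℝ)
    (hc0 : c 0 = Real.sqrt D)
    (hu : ∀ i : ℤ, 0 ≤ i → u i = ⌊c i⌋)
    (hcrec : ∀ i : ℤ, 0 ≤ i → c (i + 1) = 1 / (c i - u i))
    (p q : ℤ → ℤ)
    (hpm : p (-1) = 1) (hqm : q (-1) = 0)
    (hp0 : p 0 = u 0) (hq0 : q 0 = 1)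
    (hprec : ∀ i : ℤ, 0 ≤ i → p (i + 1) = u (i + 1) * p i + p (i - 1))
    (hqrec : ∀ i : ℤ, 0 ≤ i → q (i + 1) = u (i + 1) * q i + q (i - 1)) :
    ∀ i : ℤ, 0 ≤ i → ∃ ε : ℝ, 0 < ε ∧ ε ≤ 1 ∧
      |(p (i) : ℝ) ^ 2 - (D : ℝ) * (q (i) : ℝ) ^ 2| / (2 * Real.sqrt D)
        = 1 / (u (i + 1) : ℝ)
          - ε * (1 / (u (i + 1) : ℝ) ^ 2) * (1 / (u i : ℝ) + 1 / (u (i + 2) : ℝ)) ∧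
      |(p (i) : ℝ) ^ 2 - (D : ℝ) * (q (i) : ℝ) ^ 2| < 2 * Real.sqrt D / (u (i + 1) : ℝ) := by
  intro i hi
  have hD : (1 : ℝ) < D := by exact_mod_cast (by omega : 1 < D)
  have hc : IsContinuedFraction u c :=
    ⟨hc0 ▸ irrational_sqrt_of_squarefree hDsf (by omega),
      hc0 ▸ Real.lt_sqrt zero_le_one |>.mpr (by simpa using hD), hu, hcrec⟩
  obtain ⟨δ, hδ, hδS, hN⟩ :=
    hc.exists_abs_norm_div_eq ⟨hpm, hqm, hp0, hq0, hprec, hqrec⟩ hi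
  rw [hc0, Real.sq_sqrt (by positivity)] at hN
  have hU : (0 : ℝ) < u (i + 1) := zero_lt_one.trans_le (hc.one_le_partial (by omega))
  obtain ⟨ε, hε, hε₁, hεeq⟩ := exists_one_div_add_eq_one_div_sub hU hδ hδS
  refine ⟨ε, hε, hε₁, hN.trans hεeq, ?_⟩
  have hlt : 1 / (u (i + 1) + δ) < 1 / (u (i + 1) : ℝ) :=
    one_div_lt_one_div_of_lt hU (by linarith)
  rwa [← hN, div_lt_iff₀ (by positivity), one_div_mul_eq_div] at hlt
end

section
/- For i odd, the inequality |T_{i+1}/N_{i+1} − u_{i+2}/2| < 1/2 holds; equivalently, N_{i+1} > |−2√D + N_{i+1}(c_{i+2} + 1/c_{i+3})|. -/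
open Real

/-!
Write `e j = p j - q j √D` for the conjugate of `α j`, so that `|N(α (i+1))| = α (i+1) |e (i+1)|`.
The complete quotients are ratios of consecutive errors, `c (j+2) |e (j+1)| = |e j|`, and
`T (i+1) = α (i+1) e i - √D`; hence both inequalities say
`|α (i+1) (|e i| + |e (i+2)|) - 2√D| < α (i+1) |e (i+1)|`.
The determinant identity gives `q (j+1) |e j| + q j |e (j+1)| = 1`. Applied at `i` and `i+1`, it
turns `q (i+1)` times the left-hand side into an expression in `x = |e (i+1)|` alone, and the claim
follows from the classical bounds `1 < (q (i+1) + q (i+2)) x` and `q (i+2) x < 1`. The parity of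
`i` enters through the sign of `e (i+1)`: it is negative, so `α (i+1) + x = 2 q (i+1) √D`.
-/

structure IsCFExpansion (ξ : ℝ) (u : ℤ → ℤ) (c : ℤ → ℝ) : Prop where
  c_zero : c 0 = ξ
  u_eq_floor : ∀ j, 0 ≤ j → u j = ⌊c j⌋
  c_succ : ∀ j, 0 ≤ j → c (j + 1) = 1 / (c j - u j)

structure IsConvergents_s14 (u p q : ℤ → ℤ) : Prop where
  p_neg_one : p (-1) = 1
  q_neg_one : q (-1) = 0
  p_zero : p 0 = u 0
  q_zero : q 0 = 1
  p_succ : ∀ j, 0 ≤ j → p (j + 1) = u (j + 1) * p j + p (j - 1)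
  q_succ : ∀ j, 0 ≤ j → q (j + 1) = u (j + 1) * q j + q (j - 1)

def convergentError (ξ : ℝ) (p q : ℤ → ℤ) (j : ℤ) : ℝ := p j - q j * ξ

theorem abs_sq_sub_mul_sq {ξ D : ℝ} (hξD : ξ ^ 2 = D) (p q : ℤ → ℤ) (n : ℤ)
    (hA : 0 ≤ p n + q n * ξ) :
    |(p n : ℝ) ^ 2 - D * (q n : ℝ) ^ 2| = (p n + q n * ξ) * |convergentError ξ p q n| := by
  rw [← abs_of_nonneg hA, ← abs_mul, convergentError, ← hξD]
  ring_nf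

theorem abs_div_sub_half_lt {T N v : ℝ} (hN : 0 < N) (h : |2 * T - v * N| < N) :
    |T / N - v / 2| < 1 / 2 := by
  have h2N : 0 < 2 * N := by linarith
  rw [show T / N - v / 2 = (2 * T - v * N) / (2 * N) by field_simp, abs_div, abs_of_pos h2N,
    div_lt_iff₀ h2N]
  linarith

namespace IsCFExpansion

variable {ξ : ℝ} {u : ℤ → ℤ} {c : ℤ → ℝ} {j : ℤ}

theorem irrational (hc : IsCFExpansion ξ u c) (hξ : Irrational ξ) (hj : 0 ≤ j) :
    Irrational (c j) := by
  induction j, hj using Int.leInduction with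
  | base => rwa [hc.c_zero]
  | succ n hn ih => rw [hc.c_succ n hn, one_div]; exact (ih.sub_intCast (u n)).inv

theorem u_lt (hc : IsCFExpansion ξ u c) (hξ : Irrational ξ) (hj : 0 ≤ j) : (u j : ℝ) < c j := by
  rw [hc.u_eq_floor j hj]
  exact (Int.floor_le _).lt_of_ne ((hc.irrational hξ hj).ne_int _).symm

theorem lt_u_add_one (hc : IsCFExpansion ξ u c) (hj : 0 ≤ j) : c j < u j + 1 := by
  rw [hc.u_eq_floor j hj]
  exact Int.lt_floor_add_one _

theorem c_succ_mul (hc : IsCFExpansion ξ u c) (hξ : Irrational ξ) (hj : 0 ≤ j) :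
    c (j + 1) * (c j - u j) = 1 := by
  rw [hc.c_succ j hj]
  exact one_div_mul_cancel (sub_pos.2 (hc.u_lt hξ hj)).ne'

theorem one_lt (hc : IsCFExpansion ξ u c) (hξ : Irrational ξ) (hξ₁ : 1 < ξ) (hj : 0 ≤ j) :
    1 < c j := by
  obtain rfl | hj := hj.eq_or_lt
  · rwa [hc.c_zero]
  obtain ⟨n, hn, rfl⟩ : ∃ n, 0 ≤ n ∧ j = n + 1 := ⟨j - 1, by omega, by ring⟩
  rw [hc.c_succ n hn]
  exact one_lt_one_div (sub_pos.2 (hc.u_lt hξ hn)) (by linarith [hc.lt_u_add_one hn])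

theorem one_le_u (hc : IsCFExpansion ξ u c) (hξ : Irrational ξ) (hξ₁ : 1 < ξ) (hj : 0 ≤ j) :
    1 ≤ u j := by
  rw [hc.u_eq_floor j hj, Int.le_floor, Int.cast_one]
  exact (hc.one_lt hξ hξ₁ hj).le

end IsCFExpansion

theorem one_le_of_recurrence {u x : ℤ → ℤ} (hu : ∀ j, 0 ≤ j → 1 ≤ u j) (hx_neg_one : 0 ≤ x (-1))
    (hx₀ : 1 ≤ x 0) (hrec : ∀ j, 0 ≤ j → x (j + 1) = u (j + 1) * x j + x (j - 1))
    {j : ℤ} (hj : 0 ≤ j) : 1 ≤ x j := by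
  suffices 1 ≤ x j ∧ 0 ≤ x (j - 1) from this.1
  induction j, hj using Int.leInduction with
  | base => exact ⟨hx₀, hx_neg_one⟩
  | succ n hn ih =>
    rw [hrec n hn, add_sub_cancel_right]
    have hu₁ := hu (n + 1) (by omega)
    have := mul_le_mul hu₁ ih.1 zero_le_one (by omega)
    omega

namespace IsConvergents_s14

variable {ξ : ℝ} {u p q : ℤ → ℤ} {c : ℤ → ℝ} {j : ℤ}

local notation "e" => convergentError ξ p q

theorem det (hpq : IsConvergents_s14 u p q) (hj : -1 ≤ j) :
    p (j + 1) * q j - p j * q (j + 1) = j.negOnePow := by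
  induction j, hj using Int.leInduction with
  | base => simp [hpq.p_neg_one, hpq.q_neg_one, hpq.q_zero]
  | succ n hn ih =>
    have hp := hpq.p_succ (n + 1) (by omega)
    have hq := hpq.q_succ (n + 1) (by omega)
    rw [add_sub_cancel_right] at hp hq
    rw [hp, hq, Int.negOnePow_succ, Units.val_neg, ← ih]
    ring

theorem one_le_q (hpq : IsConvergents_s14 u p q) (hu : ∀ j, 0 ≤ j → 1 ≤ u j) (hj : 0 ≤ j) :
    1 ≤ q j :=
  one_le_of_recurrence hu hpq.q_neg_one.ge hpq.q_zero.ge hpq.q_succ hj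

theorem one_le_p (hpq : IsConvergents_s14 u p q) (hu : ∀ j, 0 ≤ j → 1 ≤ u j) (hj : 0 ≤ j) :
    1 ≤ p j :=
  one_le_of_recurrence hu (by rw [hpq.p_neg_one]; norm_num) (hpq.p_zero ▸ hu 0 le_rfl)
    hpq.p_succ hj

theorem q_nonneg (hpq : IsConvergents_s14 u p q) (hu : ∀ j, 0 ≤ j → 1 ≤ u j) (hj : -1 ≤ j) :
    0 ≤ q j := by
  obtain rfl | hj := hj.eq_or_lt
  · exact hpq.q_neg_one.ge
  · linarith [hpq.one_le_q hu (j := j) (by omega)]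

theorem q_add_one_le (hpq : IsConvergents_s14 u p q) (hu : ∀ j, 0 ≤ j → 1 ≤ u j) (hj : -1 ≤ j)
    (hj₀ : j ≠ 0) : q j + 1 ≤ q (j + 1) := by
  obtain rfl | hj := hj.eq_or_lt
  · simp [hpq.q_neg_one, hpq.q_zero]
  rw [hpq.q_succ j (by omega)]
  have := mul_le_mul_of_nonneg_right (hu (j + 1) (by omega)) (hpq.q_nonneg hu (j := j) (by omega))
  linarith [hpq.one_le_q hu (j := j - 1) (by omega)]

theorem error_succ (hpq : IsConvergents_s14 u p q) (hj : 0 ≤ j) :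
    e (j + 1) = u (j + 1) * e j + e (j - 1) := by
  simp only [convergentError, hpq.p_succ j hj, hpq.q_succ j hj]
  push_cast
  ring

theorem q_mul_error_sub (hpq : IsConvergents_s14 u p q) (hj : -1 ≤ j) :
    q (j + 1) * e j - q j * e (j + 1) = -(j.negOnePow : ℝ) := by
  have hdet : ((p (j + 1) * q j - p j * q (j + 1) : ℤ) : ℝ) = (j.negOnePow : ℤ) := by
    rw [hpq.det hj]
  push_cast at hdet
  simp only [convergentError]
  linear_combination -hdet

theorem c_mul_error (hpq : IsConvergents_s14 u p q) (hc : IsCFExpansion ξ u c) (hξ : Irrational ξ)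
    (hj : -1 ≤ j) : c (j + 2) * e (j + 1) = -e j := by
  induction j, hj using Int.leInduction with
  | base =>
    have h := hc.c_succ_mul hξ le_rfl
    simp only [zero_add, hc.c_zero] at h
    norm_num [convergentError, hpq.p_neg_one, hpq.q_neg_one, hpq.p_zero, hpq.q_zero]
    linear_combination -h
  | succ n hn ih =>
    have hrec := hpq.error_succ (ξ := ξ) (j := n + 1) (by omega)
    have h := hc.c_succ_mul hξ (j := n + 2) (by omega)
    rw [add_sub_cancel_right, add_assoc, one_add_one_eq_two] at hrec
    rw [show n + 1 + 2 = n + 2 + 1 by ring, show n + 1 + 1 = n + 2 by ring, hrec]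
    linear_combination (-e (n + 1)) * h + c (n + 2 + 1) * ih

theorem error_sign (hpq : IsConvergents_s14 u p q) (hc : IsCFExpansion ξ u c) (hξ : Irrational ξ)
    (hξ₁ : 1 < ξ) (hj : -1 ≤ j) : (Odd j → 0 < e j) ∧ (Even j → e j < 0) := by
  induction j, hj using Int.leInduction with
  | base =>
    refine ⟨fun _ ↦ ?_, fun h ↦ absurd h (by decide)⟩
    norm_num [convergentError, hpq.p_neg_one, hpq.q_neg_one]
  | succ n hn ih =>
    have hcpos : 0 ≤ c (n + 2) := by linarith [hc.one_lt hξ hξ₁ (j := n + 2) (by omega)]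
    have hmul := hpq.c_mul_error hc hξ hn
    refine ⟨fun hodd ↦ ?_, fun heven ↦ ?_⟩
    · have hneg := ih.2 (by simpa [Int.even_add_one, ← Int.not_odd_iff_even] using hodd)
      exact pos_of_mul_pos_right (by linarith) hcpos
    · have hpos := ih.1 (by simpa [Int.even_add_one, Int.not_even_iff_odd] using heven)
      exact neg_of_mul_neg_right (by linarith) hcpos

theorem error_ne_zero (hpq : IsConvergents_s14 u p q) (hc : IsCFExpansion ξ u c) (hξ : Irrational ξ)
    (hξ₁ : 1 < ξ) (hj : -1 ≤ j) : e j ≠ 0 := by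
  rcases Int.even_or_odd j with h | h
  · exact ((hpq.error_sign hc hξ hξ₁ hj).2 h).ne
  · exact ((hpq.error_sign hc hξ hξ₁ hj).1 h).ne'

theorem c_mul_abs_error (hpq : IsConvergents_s14 u p q) (hc : IsCFExpansion ξ u c)
    (hξ : Irrational ξ) (hξ₁ : 1 < ξ) (hj : -1 ≤ j) : c (j + 2) * |e (j + 1)| = |e j| := by
  have hc1 := hc.one_lt hξ hξ₁ (j := j + 2) (by omega)
  rw [← abs_neg (e j), ← hpq.c_mul_error hc hξ hj, abs_mul,
    abs_of_pos (by linarith : 0 < c (j + 2))]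

theorem abs_error_succ_lt (hpq : IsConvergents_s14 u p q) (hc : IsCFExpansion ξ u c)
    (hξ : Irrational ξ) (hξ₁ : 1 < ξ) (hj : -1 ≤ j) : |e (j + 1)| < |e j| := by
  rw [← hpq.c_mul_abs_error hc hξ hξ₁ hj]
  exact lt_mul_left (abs_pos.2 (hpq.error_ne_zero hc hξ hξ₁ (by omega)))
    (hc.one_lt hξ hξ₁ (by omega))

theorem q_mul_abs_error_add (hpq : IsConvergents_s14 u p q) (hc : IsCFExpansion ξ u c)
    (hξ : Irrational ξ) (hξ₁ : 1 < ξ) (hj : -1 ≤ j) :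
    q (j + 1) * |e j| + q j * |e (j + 1)| = 1 := by
  have h := hpq.q_mul_error_sub (ξ := ξ) hj
  have hsign := hpq.error_sign hc hξ hξ₁ hj
  have hsign₁ := hpq.error_sign hc hξ hξ₁ (j := j + 1) (by omega)
  rcases Int.even_or_odd j with hpar | hpar
  · rw [Int.negOnePow_even j hpar] at h
    rw [abs_of_neg (hsign.2 hpar), abs_of_pos (hsign₁.1 hpar.add_one)]
    push_cast at h
    linarith
  · rw [Int.negOnePow_odd j hpar] at h
    rw [abs_of_pos (hsign.1 hpar), abs_of_neg (hsign₁.2 hpar.add_one)]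
    push_cast at h
    linarith

theorem q_succ_mul_abs_error_lt_one (hpq : IsConvergents_s14 u p q) (hc : IsCFExpansion ξ u c)
    (hξ : Irrational ξ) (hξ₁ : 1 < ξ) (hj : 0 ≤ j) : q (j + 1) * |e j| < 1 := by
  have hq : (1 : ℝ) ≤ q j := by exact_mod_cast hpq.one_le_q (fun _ ↦ hc.one_le_u hξ hξ₁) hj
  have hpos := abs_pos.2 (hpq.error_ne_zero hc hξ hξ₁ (j := j + 1) (by omega))
  nlinarith [hpq.q_mul_abs_error_add hc hξ hξ₁ (j := j) (by omega)]

theorem one_lt_q_add_q_succ_mul_abs_error (hpq : IsConvergents_s14 u p q) (hc : IsCFExpansion ξ u c)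
    (hξ : Irrational ξ) (hξ₁ : 1 < ξ) (hj : 0 ≤ j) : 1 < (q j + q (j + 1)) * |e j| := by
  have hq : (1 : ℝ) ≤ q j := by exact_mod_cast hpq.one_le_q (fun _ ↦ hc.one_le_u hξ hξ₁) hj
  have hlt := hpq.abs_error_succ_lt hc hξ hξ₁ (j := j) (by omega)
  nlinarith [hpq.q_mul_abs_error_add hc hξ hξ₁ (j := j) (by omega)]

theorem one_lt_p_add_q_mul (hpq : IsConvergents_s14 u p q) (hc : IsCFExpansion ξ u c)
    (hξ : Irrational ξ) (hξ₁ : 1 < ξ) (hj : 0 ≤ j) : 1 < p j + q j * ξ := by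
  have hu := fun j ↦ hc.one_le_u (j := j) hξ hξ₁
  have hp : (1 : ℝ) ≤ p j := by exact_mod_cast hpq.one_le_p hu hj
  have hq : (1 : ℝ) ≤ q j := by exact_mod_cast hpq.one_le_q hu hj
  nlinarith

theorem abs_mul_abs_error_add_sub_lt (hpq : IsConvergents_s14 u p q) (hc : IsCFExpansion ξ u c)
    (hξ : Irrational ξ) (hξ₁ : 1 < ξ) (hj : Odd j) (hj₁ : -1 ≤ j) :
    |(p (j + 1) + q (j + 1) * ξ) * (|e j| + |e (j + 2)|) - 2 * ξ|
      < (p (j + 1) + q (j + 1) * ξ) * |e (j + 1)| := by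
  have hu := fun j ↦ hc.one_le_u (j := j) hξ hξ₁
  have hq₀ : (0 : ℝ) ≤ q j := by exact_mod_cast hpq.q_nonneg hu hj₁
  have hq₀₁ : (q j : ℝ) + 1 ≤ q (j + 1) := by
    exact_mod_cast hpq.q_add_one_le hu hj₁ (by rintro rfl; simp at hj)
  have hA : 1 < p (j + 1) + q (j + 1) * ξ := hpq.one_lt_p_add_q_mul hc hξ hξ₁ (by omega)
  have hx : 0 < |e (j + 1)| := abs_pos.2 (hpq.error_ne_zero hc hξ hξ₁ (by omega))
  have hAx : p (j + 1) + q (j + 1) * ξ + |e (j + 1)| = 2 * q (j + 1) * ξ := by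
    rw [abs_of_neg ((hpq.error_sign hc hξ hξ₁ (by omega)).2 hj.add_one), convergentError]
    ring
  have hsum₀ := hpq.q_mul_abs_error_add hc hξ hξ₁ hj₁
  have hsum₁ := hpq.q_mul_abs_error_add hc hξ hξ₁ (j := j + 1) (by omega)
  have hupper := hpq.q_succ_mul_abs_error_lt_one hc hξ hξ₁ (j := j + 1) (by omega)
  have hlower := hpq.one_lt_q_add_q_succ_mul_abs_error hc hξ hξ₁ (j := j + 1) (by omega)
  rw [add_assoc, one_add_one_eq_two] at hsum₁ hupper hlower
  set A := (p (j + 1) : ℝ) + q (j + 1) * ξ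
  set x := |e (j + 1)|
  have hq₁ : (0 : ℝ) < q (j + 1) := by linarith
  have hE : q (j + 1) * (A * (|e j| + |e (j + 2)|) - 2 * ξ)
      = A * (1 - (q j + q (j + 2)) * x) - x := by
    linear_combination A * hsum₀ + A * hsum₁ + hAx
  rw [← mul_lt_mul_iff_right₀ hq₁, ← abs_of_pos hq₁, ← abs_mul, abs_of_pos hq₁, hE, abs_lt]
  constructor
  · nlinarith [mul_pos (by linarith : (0 : ℝ) < A) (sub_pos.2 hupper),
      mul_nonneg hx.le (by nlinarith : (0 : ℝ) ≤ A * (q (j + 1) - q j) - 1)]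
  · nlinarith [mul_pos (by linarith : (0 : ℝ) < A) (sub_pos.2 hlower),
      mul_nonneg (mul_nonneg (by linarith : (0 : ℝ) ≤ A) hq₀) hx.le]

theorem abs_error_mul_c_add_inv (hpq : IsConvergents_s14 u p q) (hc : IsCFExpansion ξ u c)
    (hξ : Irrational ξ) (hξ₁ : 1 < ξ) (hj : -1 ≤ j) :
    |e (j + 1)| * (c (j + 2) + 1 / c (j + 3)) = |e j| + |e (j + 2)| := by
  have h₀ := hpq.c_mul_abs_error hc hξ hξ₁ hj
  have h₁ := hpq.c_mul_abs_error hc hξ hξ₁ (j := j + 1) (by omega)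
  have hc₃ := hc.one_lt hξ hξ₁ (j := j + 3) (by omega)
  rw [show j + 1 + 2 = j + 3 by ring, show j + 1 + 1 = j + 2 by ring] at h₁
  field_simp
  linear_combination c (j + 3) * h₀ - h₁

theorem two_mul_sub_u_mul {D : ℝ} (hpq : IsConvergents_s14 u p q) (hc : IsCFExpansion ξ u c)
    (hξ : Irrational ξ) (hξ₁ : 1 < ξ) (hξD : ξ ^ 2 = D) (hj : Odd j) (hj₁ : -1 ≤ j) :
    2 * ((p (j + 1) * p j : ℝ) - D * (q (j + 1) * q j))
        - u (j + 2) * ((p (j + 1) + q (j + 1) * ξ) * |e (j + 1)|)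
      = (p (j + 1) + q (j + 1) * ξ) * (|e j| + |e (j + 2)|) - 2 * ξ := by
  have hsign := hpq.error_sign hc hξ hξ₁ hj₁
  have hsign₁ := hpq.error_sign hc hξ hξ₁ (j := j + 1) (by omega)
  have hsign₂ := hpq.error_sign hc hξ hξ₁ (j := j + 2) (by omega)
  rw [abs_of_pos (hsign.1 hj), abs_of_neg (hsign₁.2 hj.add_one),
    abs_of_pos (hsign₂.1 (hj.add_even even_two))]
  have hdet : ((p (j + 1) * q j - p j * q (j + 1) : ℤ) : ℝ) = (j.negOnePow : ℤ) := by
    rw [hpq.det hj₁]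
  rw [Int.negOnePow_odd j hj] at hdet
  push_cast at hdet
  have hrec := hpq.error_succ (ξ := ξ) (j := j + 1) (by omega)
  rw [add_sub_cancel_right, add_assoc, one_add_one_eq_two] at hrec
  rw [hrec]
  simp only [convergentError]
  linear_combination (2 * (q (j + 1) : ℝ) * q j) * hξD + 2 * ξ * hdet

end IsConvergents_s14

theorem stmt14_general (D : ℕ) (hD4 : D % 4 = 2 ∨ D % 4 = 3)
    (u : ℤ → ℤ) (c : ℤ → ℝ)
    (hc0 : c 0 = Real.sqrt D)
    (hu : ∀ i : ℤ, 0 ≤ i → u i = ⌊c i⌋)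
    (hcrec : ∀ i : ℤ, 0 ≤ i → c (i + 1) = 1 / (c i - u i))
    (p q : ℤ → ℤ)
    (hpm : p (-1) = 1) (hqm : q (-1) = 0)
    (hp0 : p 0 = u 0) (hq0 : q 0 = 1)
    (hprec : ∀ i : ℤ, 0 ≤ i → p (i + 1) = u (i + 1) * p i + p (i - 1))
    (hqrec : ∀ i : ℤ, 0 ≤ i → q (i + 1) = u (i + 1) * q i + q (i - 1)) :
    ∀ i : ℤ, Odd i → -1 ≤ i →
      |((p (i + 1) * p i - (D : ℤ) * (q (i + 1) * q i) : ℤ) : ℝ) / |(p (i + 1) : ℝ) ^ 2 - (D : ℝ) * (q (i + 1) : ℝ) ^ 2| - (u (i + 2) : ℝ) / 2| < 1 / 2 ∧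
      |-2 * Real.sqrt D + |(p (i + 1) : ℝ) ^ 2 - (D : ℝ) * (q (i + 1) : ℝ) ^ 2| * (c (i + 2) + 1 / c (i + 3))| < |(p (i + 1) : ℝ) ^ 2 - (D : ℝ) * (q (i + 1) : ℝ) ^ 2| := by
  intro i hi hi₁
  have hD : ¬IsSquare D := by
    rintro ⟨k, rfl⟩
    have := Nat.mod_lt k four_pos
    interval_cases h : k % 4 <;> simp [Nat.mul_mod, h] at hD4
  have hξ : Irrational √D := irrational_sqrt_natCast_iff.2 hD
  have hξ₁ : 1 < √(D : ℝ) := by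
    rw [Real.lt_sqrt zero_le_one, one_pow, Nat.one_lt_cast]
    omega
  have hξD : √(D : ℝ) ^ 2 = D := Real.sq_sqrt (Nat.cast_nonneg _)
  have hc : IsCFExpansion √D u c := ⟨hc0, hu, hcrec⟩
  have hpq : IsConvergents_s14 u p q := ⟨hpm, hqm, hp0, hq0, hprec, hqrec⟩
  have hA := hpq.one_lt_p_add_q_mul hc hξ hξ₁ (j := i + 1) (by omega)
  have hkey := hpq.abs_mul_abs_error_add_sub_lt hc hξ hξ₁ hi hi₁
  have hT := hpq.two_mul_sub_u_mul hc hξ hξ₁ hξD hi hi₁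
  rw [abs_sq_sub_mul_sq hξD p q (i + 1) (by linarith)]
  set N := (p (i + 1) + q (i + 1) * √D) * |convergentError √D p q (i + 1)|
  have hN : 0 < N := mul_pos (by linarith) (abs_pos.2 (hpq.error_ne_zero hc hξ hξ₁ (by omega)))
  constructor
  · push_cast
    exact abs_div_sub_half_lt hN (hT ▸ hkey)
  · rw [mul_assoc, hpq.abs_error_mul_c_add_inv hc hξ hξ₁ hi₁]
    convert hkey using 2
    ring

theorem stmt14 (D : ℕ) (hDsf : Squarefree D) (hD4 : D % 4 = 2 ∨ D % 4 = 3)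
    (u : ℤ → ℤ) (c : ℤ → ℝ)
    (hc0 : c 0 = Real.sqrt D)
    (hu : ∀ i : ℤ, 0 ≤ i → u i = ⌊c i⌋)
    (hcrec : ∀ i : ℤ, 0 ≤ i → c (i + 1) = 1 / (c i - u i))
    (p q : ℤ → ℤ)
    (hpm : p (-1) = 1) (hqm : q (-1) = 0)
    (hp0 : p 0 = u 0) (hq0 : q 0 = 1)
    (hprec : ∀ i : ℤ, 0 ≤ i → p (i + 1) = u (i + 1) * p i + p (i - 1))
    (hqrec : ∀ i : ℤ, 0 ≤ i → q (i + 1) = u (i + 1) * q i + q (i - 1)) :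
    ∀ i : ℤ, Odd i → -1 ≤ i →
      |((p (i + 1) * p i - (D : ℤ) * (q (i + 1) * q i) : ℤ) : ℝ) / |(p (i + 1) : ℝ) ^ 2 - (D : ℝ) * (q (i + 1) : ℝ) ^ 2| - (u (i + 2) : ℝ) / 2| < 1 / 2 ∧
      |-2 * Real.sqrt D + |(p (i + 1) : ℝ) ^ 2 - (D : ℝ) * (q (i + 1) : ℝ) ^ 2| * (c (i + 2) + 1 / c (i + 3))| < |(p (i + 1) : ℝ) ^ 2 - (D : ℝ) * (q (i + 1) : ℝ) ^ 2| :=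
  stmt14_general D hD4 u c hc0 hu hcrec p q hpm hqm hp0 hq0 hprec hqrec
end

section
/- Let i be odd and r_0 ∈ {0,...,u_{i+2}} be an index at which N(α_{i,r}) is maximal among 0 ≤ r ≤ u_{i+2}. Then u_{i+2}/2 − 1 < r_0 < u_{i+2}/2 + 1; in particular if u_{i+2} is even then r_0 = u_{i+2}/2. -/
/-!
Write `α_j = p_j + q_j √D` and `ᾱ_j` for its conjugate. Since `√D² = D`, the norm of the
semiconvergent `α_i + r α_{i+1}` factors as `(α_i + r α_{i+1}) (ᾱ_i + r ᾱ_{i+1})`, and the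
classical identity `ᾱ_i = -c_{i+2} ᾱ_{i+1}` (with `c_j` the complete quotients) turns it into
`(α_i + r α_{i+1}) (r - c_{i+2}) ᾱ_{i+1}`. For odd `i` we have `ᾱ_{i+1} < 0 < α_i < α_{i+1}`, so
this is a concave quadratic in `r` whose forward difference at `r` has the sign of
`c_{i+2} - 2r - 1 - α_i / α_{i+1}`. As `u_{i+2} ≤ c_{i+2} < u_{i+2} + 1`, the difference is
positive when `2r + 2 ≤ u_{i+2}` and negative when `2r ≥ u_{i+2} + 2`, which confines the
integer maximiser to the open interval of radius `1` around `u_{i+2} / 2`.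
-/

theorem Nat.not_isSquare_of_mod_four_s15 {n : ℕ} (h : n % 4 = 2 ∨ n % 4 = 3) : ¬IsSquare n := by
  rintro ⟨k, rfl⟩
  have : k % 4 < 4 := Nat.mod_lt _ (by norm_num)
  rw [Nat.mul_mod] at h
  interval_cases k % 4 <;> omega

theorem argmax_quadratic_near_half {a a' b b' C : ℝ} {U r₀ : ℤ} (ha : 0 ≤ a) (haa' : a < a')
    (hb' : b' < 0) (hb : b + C * b' = 0) (hUC : U ≤ C) (hCU : C < U + 1)
    (hr₀ : 0 ≤ r₀) (hr₀U : r₀ ≤ U)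
    (hmax : ∀ r : ℤ, 0 ≤ r → r ≤ U →
      (a + r * a') * (b + r * b') ≤ (a + r₀ * a') * (b + r₀ * b')) :
    (U : ℝ) / 2 - 1 < r₀ ∧ (r₀ : ℝ) < U / 2 + 1 := by
  have step : ∀ r : ℝ, (a + (r + 1) * a') * (b + (r + 1) * b') - (a + r * a') * (b + r * b') =
      b' * (a + a' * (2 * r + 1 - C)) := fun r => by linear_combination a' * hb
  constructor
  · by_contra! hle
    have hr : 2 * r₀ + 2 ≤ U := by exact_mod_cast (by linarith : (2 * r₀ + 2 : ℝ) ≤ U)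
    have hm := hmax (r₀ + 1) (by omega) (by omega)
    have : a' * (2 * r₀ + 1 - C) ≤ a' * (-1) :=
      mul_le_mul_of_nonneg_left (by linarith) (ha.trans haa'.le)
    have := mul_pos_of_neg_of_neg hb' (by linarith : a + a' * (2 * r₀ + 1 - C) < 0)
    push_cast at hm
    linarith [step r₀]
  · by_contra! hle
    have hr : U + 2 ≤ 2 * r₀ := by exact_mod_cast (by linarith : (U + 2 : ℝ) ≤ 2 * r₀)
    have hm := hmax (r₀ - 1) (by omega) (by omega)
    have := mul_pos (ha.trans_lt haa') (by linarith : 0 < 2 * (r₀ - 1 : ℝ) + 1 - C)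
    have := mul_neg_of_neg_of_pos hb' (by linarith : 0 < a + a' * (2 * (r₀ - 1 : ℝ) + 1 - C))
    push_cast at hm
    linarith [step (r₀ - 1)]

/-- `c j` and `u j` are the complete and the partial quotients of the continued fraction of `x`. -/
structure IsCompleteQuotientSeq (x : ℝ) (u : ℤ → ℤ) (c : ℤ → ℝ) : Prop where
  zero : c 0 = x
  floor : ∀ j, 0 ≤ j → u j = ⌊c j⌋
  succ : ∀ j, 0 ≤ j → c (j + 1) = 1 / (c j - u j)

namespace IsCompleteQuotientSeq

variable {x : ℝ} {u : ℤ → ℤ} {c : ℤ → ℝ} {j : ℤ}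

theorem irrational (h : IsCompleteQuotientSeq x u c) (hx : Irrational x) (hj : 0 ≤ j) :
    Irrational (c j) := by
  induction j, hj using Int.leInduction with
  | base => rwa [h.zero]
  | succ n hn ih =>
    rw [h.succ n hn, h.floor n hn, one_div]
    exact (ih.sub_intCast _).inv

theorem sub_pos (h : IsCompleteQuotientSeq x u c) (hx : Irrational x) (hj : 0 ≤ j) :
    0 < c j - u j := by
  rw [h.floor j hj, Int.self_sub_floor, Int.fract_pos]
  exact (h.irrational hx hj).ne_int _

theorem succ_mul_sub (h : IsCompleteQuotientSeq x u c) (hx : Irrational x) (hj : 0 ≤ j) :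
    c (j + 1) * (c j - u j) = 1 := by
  rw [h.succ j hj, one_div, inv_mul_cancel₀ (h.sub_pos hx hj).ne']

theorem le (h : IsCompleteQuotientSeq x u c) (hj : 0 ≤ j) : (u j : ℝ) ≤ c j :=
  h.floor j hj ▸ Int.floor_le _

theorem lt_add_one (h : IsCompleteQuotientSeq x u c) (hj : 0 ≤ j) : c j < u j + 1 :=
  h.floor j hj ▸ Int.lt_floor_add_one _

theorem one_lt (h : IsCompleteQuotientSeq x u c) (hx : Irrational x) (hx1 : 1 < x)
    (hj : 0 ≤ j) : 1 < c j := by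
  obtain rfl | hj := hj.eq_or_lt
  · rwa [h.zero]
  obtain ⟨k, hk, rfl⟩ : ∃ k, 0 ≤ k ∧ j = k + 1 := ⟨j - 1, by omega, by ring⟩
  rw [h.succ k hk, one_div, one_lt_inv₀ (h.sub_pos hx hk)]
  linarith [h.lt_add_one hk]

theorem one_le (h : IsCompleteQuotientSeq x u c) (hx : Irrational x) (hx1 : 1 < x)
    (hj : 0 ≤ j) : 1 ≤ u j := by
  rw [h.floor j hj, Int.le_floor]
  exact_mod_cast (h.one_lt hx hx1 hj).le

end IsCompleteQuotientSeq

structure IsConvergentSeq (u p q : ℤ → ℤ) : Prop where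
  p_neg_one : p (-1) = 1
  q_neg_one : q (-1) = 0
  p_zero : p 0 = u 0
  q_zero : q 0 = 1
  p_succ : ∀ j, 0 ≤ j → p (j + 1) = u (j + 1) * p j + p (j - 1)
  q_succ : ∀ j, 0 ≤ j → q (j + 1) = u (j + 1) * q j + q (j - 1)

/-- `α_j = p_j + q_j √D` is `convergentAt p q √D j`; its conjugate is `convergentAt p q (-√D) j`. -/
def convergentAt (p q : ℤ → ℤ) (y : ℝ) (j : ℤ) : ℝ := p j + q j * y

namespace IsConvergentSeq

variable {u p q : ℤ → ℤ} {j : ℤ}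

theorem convergentAt_add_two (h : IsConvergentSeq u p q) (y : ℝ) (hj : -1 ≤ j) :
    convergentAt p q y (j + 2) = u (j + 2) * convergentAt p q y (j + 1) + convergentAt p q y j := by
  have hp := h.p_succ (j + 1) (by omega)
  have hq := h.q_succ (j + 1) (by omega)
  rw [show j + 1 + 1 = j + 2 by ring, add_sub_cancel_right] at hp hq
  simp only [convergentAt, hp, hq]
  push_cast
  ring

theorem convergentAt_pos_and_lt_succ (h : IsConvergentSeq u p q) {x : ℝ} (hx : 0 < x)
    (hu : ∀ j, 0 ≤ j → 1 ≤ u j) (hj : -1 ≤ j) :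
    0 < convergentAt p q x j ∧ convergentAt p q x j < convergentAt p q x (j + 1) := by
  induction j, hj using Int.leInduction with
  | base =>
    have hu0 : (1 : ℝ) ≤ u 0 := by exact_mod_cast hu 0 le_rfl
    simp only [convergentAt, h.p_neg_one, h.q_neg_one, show (-1 : ℤ) + 1 = 0 by rfl, h.p_zero,
      h.q_zero]
    norm_num
    linarith
  | succ n hn ih =>
    obtain ⟨hpos, hlt⟩ := ih
    have hu2 : (1 : ℝ) ≤ u (n + 2) := by exact_mod_cast hu (n + 2) (by omega)
    refine ⟨hpos.trans hlt, ?_⟩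
    rw [show n + 1 + 1 = n + 2 by ring, h.convergentAt_add_two x hn]
    nlinarith

theorem convergentAt_neg_add_mul (h : IsConvergentSeq u p q) {x : ℝ} {c : ℤ → ℝ}
    (hc : IsCompleteQuotientSeq x u c) (hx : Irrational x) (hj : -1 ≤ j) :
    convergentAt p q (-x) j + c (j + 2) * convergentAt p q (-x) (j + 1) = 0 := by
  induction j, hj using Int.leInduction with
  | base =>
    have h0 := hc.succ_mul_sub hx le_rfl
    simp only [convergentAt, h.p_neg_one, h.q_neg_one, show (-1 : ℤ) + 1 = 0 by rfl,
      show (-1 : ℤ) + 2 = 1 by rfl, h.p_zero, h.q_zero, hc.zero] at h0 ⊢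
    push_cast at h0 ⊢
    linear_combination -h0
  | succ n hn ih =>
    have h2 := hc.succ_mul_sub hx (j := n + 2) (by omega)
    rw [show n + 1 + 2 = n + 2 + 1 by ring, show n + 1 + 1 = n + 2 by ring,
      h.convergentAt_add_two (-x) hn]
    linear_combination c (n + 2 + 1) * ih - convergentAt p q (-x) (n + 1) * h2

theorem convergentAt_neg_sign (h : IsConvergentSeq u p q) {x : ℝ} {c : ℤ → ℝ}
    (hc : IsCompleteQuotientSeq x u c) (hx : Irrational x) (hx1 : 1 < x) (hj : -1 ≤ j) :
    (Even j → convergentAt p q (-x) j < 0) ∧ (Odd j → 0 < convergentAt p q (-x) j) := by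
  induction j, hj using Int.leInduction with
  | base =>
    refine ⟨fun he => absurd he (by decide), fun _ => ?_⟩
    simp [convergentAt, h.p_neg_one, h.q_neg_one]
  | succ n hn ih =>
    have hrel := h.convergentAt_neg_add_mul hc hx hn
    have hc2 := hc.one_lt hx hx1 (j := n + 2) (by omega)
    constructor
    · intro he
      have := ih.2 (by simpa [parity_simps] using he)
      nlinarith
    · intro ho
      have := ih.1 (by simpa [parity_simps] using ho)
      nlinarith

end IsConvergentSeq

theorem norm_semiconvergent_eq {D : ℕ} {x : ℝ} (hx : x ^ 2 = D) (p q : ℤ → ℤ) (i : ℤ)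
    (r : ℝ) :
    ((p i : ℝ) + r * p (i + 1)) ^ 2 - D * ((q i : ℝ) + r * q (i + 1)) ^ 2 =
      (convergentAt p q x i + r * convergentAt p q x (i + 1)) *
        (convergentAt p q (-x) i + r * convergentAt p q (-x) (i + 1)) := by
  simp only [convergentAt, ← hx]
  ring

theorem stmt15_general (D : ℕ) (hD4 : D % 4 = 2 ∨ D % 4 = 3)
    (u : ℤ → ℤ) (c : ℤ → ℝ)
    (hc0 : c 0 = Real.sqrt D)
    (hu : ∀ i : ℤ, 0 ≤ i → u i = ⌊c i⌋)
    (hcrec : ∀ i : ℤ, 0 ≤ i → c (i + 1) = 1 / (c i - u i))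
    (p q : ℤ → ℤ)
    (hpm : p (-1) = 1) (hqm : q (-1) = 0)
    (hp0 : p 0 = u 0) (hq0 : q 0 = 1)
    (hprec : ∀ i : ℤ, 0 ≤ i → p (i + 1) = u (i + 1) * p i + p (i - 1))
    (hqrec : ∀ i : ℤ, 0 ≤ i → q (i + 1) = u (i + 1) * q i + q (i - 1)) :
    ∀ i : ℤ, Odd i → -1 ≤ i → ∀ r₀ : ℤ, 0 ≤ r₀ → r₀ ≤ u (i + 2) →
      (∀ r : ℤ, 0 ≤ r → r ≤ u (i + 2) →
        (((p i : ℝ) + (r : ℝ) * (p (i + 1) : ℝ)) ^ 2 - (D : ℝ) * ((q i : ℝ) + (r : ℝ) * (q (i + 1) : ℝ)) ^ 2) ≤ (((p i : ℝ) + (r₀ : ℝ) * (p (i + 1) : ℝ)) ^ 2 - (D : ℝ) * ((q i : ℝ) + (r₀ : ℝ) * (q (i + 1) : ℝ)) ^ 2)) →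
      ((u (i + 2) : ℝ) / 2 - 1 < (r₀ : ℝ) ∧ (r₀ : ℝ) < (u (i + 2) : ℝ) / 2 + 1) ∧
      ∀ v : ℤ, u (i + 2) = 2 * v → r₀ = v := by
  intro i hi hi1 r₀ hr₀ hr₀U hmax
  have hc : IsCompleteQuotientSeq √D u c := ⟨hc0, hu, hcrec⟩
  have hpq : IsConvergentSeq u p q := ⟨hpm, hqm, hp0, hq0, hprec, hqrec⟩
  have hirr : Irrational √D := irrational_sqrt_natCast_iff.mpr (Nat.not_isSquare_of_mod_four_s15 hD4)
  have hD1 : 1 < √D := by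
    rw [Real.lt_sqrt zero_le_one]
    norm_cast
    omega
  have hsq : √D ^ 2 = D := Real.sq_sqrt (Nat.cast_nonneg D)
  obtain ⟨hpos, hlt⟩ :=
    hpq.convergentAt_pos_and_lt_succ (zero_lt_one.trans hD1) (fun _ => hc.one_le hirr hD1) hi1
  have hneg : convergentAt p q (-√D) (i + 1) < 0 :=
    (hpq.convergentAt_neg_sign hc hirr hD1 (by omega)).1 hi.add_one
  have hbound := argmax_quadratic_near_half hpos.le hlt hneg
    (hpq.convergentAt_neg_add_mul hc hirr hi1) (hc.le (by omega)) (hc.lt_add_one (by omega))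
    hr₀ hr₀U (fun r h0 hr => by simpa only [norm_semiconvergent_eq hsq] using hmax r h0 hr)
  refine ⟨hbound, fun v hv => ?_⟩
  rw [hv] at hbound
  push_cast at hbound
  have : v - 1 < r₀ := by exact_mod_cast (by linarith : (v : ℝ) - 1 < r₀)
  have : r₀ < v + 1 := by exact_mod_cast (by linarith : (r₀ : ℝ) < v + 1)
  omega

theorem stmt15 (D : ℕ) (hDsf : Squarefree D) (hD4 : D % 4 = 2 ∨ D % 4 = 3)
    (u : ℤ → ℤ) (c : ℤ → ℝ)
    (hc0 : c 0 = Real.sqrt D)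
    (hu : ∀ i : ℤ, 0 ≤ i → u i = ⌊c i⌋)
    (hcrec : ∀ i : ℤ, 0 ≤ i → c (i + 1) = 1 / (c i - u i))
    (p q : ℤ → ℤ)
    (hpm : p (-1) = 1) (hqm : q (-1) = 0)
    (hp0 : p 0 = u 0) (hq0 : q 0 = 1)
    (hprec : ∀ i : ℤ, 0 ≤ i → p (i + 1) = u (i + 1) * p i + p (i - 1))
    (hqrec : ∀ i : ℤ, 0 ≤ i → q (i + 1) = u (i + 1) * q i + q (i - 1)) :
    ∀ i : ℤ, Odd i → -1 ≤ i → ∀ r₀ : ℤ, 0 ≤ r₀ → r₀ ≤ u (i + 2) →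
      (∀ r : ℤ, 0 ≤ r → r ≤ u (i + 2) →
        (((p i : ℝ) + (r : ℝ) * (p (i + 1) : ℝ)) ^ 2 - (D : ℝ) * ((q i : ℝ) + (r : ℝ) * (q (i + 1) : ℝ)) ^ 2) ≤ (((p i : ℝ) + (r₀ : ℝ) * (p (i + 1) : ℝ)) ^ 2 - (D : ℝ) * ((q i : ℝ) + (r₀ : ℝ) * (q (i + 1) : ℝ)) ^ 2)) →
      ((u (i + 2) : ℝ) / 2 - 1 < (r₀ : ℝ) ∧ (r₀ : ℝ) < (u (i + 2) : ℝ) / 2 + 1) ∧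
      ∀ v : ℤ, u (i + 2) = 2 * v → r₀ = v :=
  stmt15_general D hD4 u c hc0 hu hcrec p q hpm hqm hp0 hq0 hprec hqrec
end
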